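/- (Influential updates lie on every minimal path.) Suppose the initial condition H : ℤ^d → ℤ satisfies |H(y) − H(y+e)| ≤ 1 for all y ∈ ℤ^d and e ∈ N. Let u = (u_1, …, u_n) be an update list, x ∈ ℤ^d, and let γ be a lattice path for u starting at x that attains the minimum of W(γ) + H(γ(0)) over all such paths. Let 0 ≤ j ≤ n and y ∈ ℤ^d, and let u' = (u_1, …, u_j, y, u_{j+1}, …, u_n) be the list obtained by inserting the location y after position j. If RSOS(u', H)(x) = RSOS(u, H)(x) + 1 (the inserted update is influential), then γ(j) = y. -/

import Mathlib

open Classical MeasureTheory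

noncomputable section

/-- The set `N` of nearest neighbors of the origin in `ℤ^d`. -/
def nbr (d : ℕ) : Set (Fin d → ℤ) :=
  {v | ∃ i : Fin d, v = Pi.single i 1 ∨ v = Pi.single i (-1)}

/-- The set `N₀` of nearest neighbors of the origin, together with the origin. -/
def nbr0 (d : ℕ) : Set (Fin d → ℤ) := nbr d ∪ {0}

/-- One RSOS update at site `x`: the height at `x` increases by one iff it is
no larger than all neighboring heights. -/
def rsosStep {d : ℕ} (f : (Fin d → ℤ) → ℤ) (x : Fin d → ℤ) : (Fin d → ℤ) → ℤ :=
  fun y => if y = x ∧ ∀ e ∈ nbr d, f x ≤ f (x + e) then f x + 1 else f y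

/-- RSOS heights after applying the update list `u` (in chronological order)
to the initial condition `H`. -/
def RSOS {d : ℕ} (u : List (Fin d → ℤ)) (H : (Fin d → ℤ) → ℤ) : (Fin d → ℤ) → ℤ :=
  u.foldl rsosStep H

/-- A lattice path for the update list `u` starting at `x`:
`γ n = x` (where `n = u.length`) and for every `1 ≤ k ≤ n` (indexed here by `k+1`
with `k < n`), either the path stays, or the `k`-th update occurs at the path's
position and the path moves to a nearest neighbor (backwards in time). -/
def IsLatticePath {d : ℕ} (u : List (Fin d → ℤ)) (x : Fin d → ℤ) (γ : ℕ → (Fin d → ℤ)) : Prop :=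
  γ u.length = x ∧
    ∀ k < u.length, γ k = γ (k + 1) ∨ (γ (k + 1) = u.getD k 0 ∧ γ k - γ (k + 1) ∈ nbr d)

/-- The weight of a lattice path: the number of indices `1 ≤ j ≤ n` with `γ j = u_j`. -/
def pathWeight {d : ℕ} (u : List (Fin d → ℤ)) (γ : ℕ → (Fin d → ℤ)) : ℕ :=
  ((Finset.range u.length).filter fun k => γ (k + 1) = u.getD k 0).card

/-- The ℓ¹ norm on `ℤ^d`. -/
def l1 {d : ℕ} (v : Fin d → ℤ) : ℕ := ∑ i, (v i).natAbs

/-! ### Auxiliary material -/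

/-- The Lipschitz condition on initial height functions. -/
def Lip {d : ℕ} (H : (Fin d → ℤ) → ℤ) : Prop :=
  ∀ z : Fin d → ℤ, ∀ e ∈ nbr d, |H z - H (z + e)| ≤ 1

lemma nbr_neg {d : ℕ} {e : Fin d → ℤ} (h : e ∈ nbr d) : -e ∈ nbr d := by
  obtain ⟨i, h | h⟩ := h
  · exact ⟨i, Or.inr (by simp [h, ← Pi.single_neg])⟩
  · exact ⟨i, Or.inl (by simp [h, ← Pi.single_neg])⟩

lemma nbr_ne_zero {d : ℕ} {e : Fin d → ℤ} (h : e ∈ nbr d) : e ≠ 0 := by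
  obtain ⟨i, h | h⟩ := h <;> subst h <;> intro hc <;> simpa using congrFun hc i

lemma lip_rsosStep {d : ℕ} {H : (Fin d → ℤ) → ℤ} (hH : Lip H) (a : Fin d → ℤ) :
    Lip (rsosStep H a) := by
  intro z e he
  unfold rsosStep
  by_cases hacc : ∀ e ∈ nbr d, H a ≤ H (a + e)
  · by_cases hz : z = a
    · subst hz
      have hza : z + e ≠ z := fun h => nbr_ne_zero he (by
        have := congrArg (· - z) h; simpa using this)
      rw [if_pos ⟨rfl, hacc⟩, if_neg (fun h => hza h.1)]
      have h1 := hacc e he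
      have h2 := hH z e he
      rw [abs_le] at h2 ⊢; omega
    · by_cases hza : z + e = a
      · rw [if_neg (fun h => hz h.1), if_pos ⟨hza, hacc⟩]
        have h1 : H a ≤ H (a + (-e)) := hacc _ (nbr_neg he)
        have h1' : H a ≤ H z := by
          rw [show a + -e = z by rw [← hza]; abel] at h1; exact h1
        have h2 := hH z e he
        rw [hza] at h2
        rw [abs_le] at h2 ⊢; omega
      · rw [if_neg (fun h => hz h.1), if_neg (fun h => hza h.1)]; exact hH z e he
  · simp only [hacc, and_false, if_false]; exact hH z e he

lemma pathWeight_cons {d : ℕ} (a : Fin d → ℤ) (l : List (Fin d → ℤ)) (γ : ℕ → (Fin d → ℤ)) :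
    pathWeight (a :: l) γ = (if γ 1 = a then 1 else 0) + pathWeight l (fun k => γ (k + 1)) := by
  unfold pathWeight
  rw [Finset.card_filter, Finset.card_filter, List.length_cons, Finset.sum_range_succ']
  simp only [List.getD_cons_zero, List.getD_cons_succ]
  rw [add_comm]

lemma isLatticePath_cons {d : ℕ} {a : Fin d → ℤ} {l : List (Fin d → ℤ)} {x : Fin d → ℤ}
    {γ : ℕ → (Fin d → ℤ)} (h : IsLatticePath (a :: l) x γ) :
    IsLatticePath l x (fun k => γ (k + 1)) := by
  obtain ⟨h1, h2⟩ := h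
  refine ⟨h1, fun k hk => ?_⟩
  have := h2 (k + 1) (by simpa using Nat.succ_lt_succ hk)
  simpa [List.getD_cons_succ] using this

/-- Lower bound: the RSOS height at `x` is at most the value of any lattice path. -/
lemma rsos_le_path {d : ℕ} : ∀ (u : List (Fin d → ℤ)) (H : (Fin d → ℤ) → ℤ), Lip H →
    ∀ (x : Fin d → ℤ) (γ : ℕ → (Fin d → ℤ)), IsLatticePath u x γ →
    RSOS u H x ≤ (pathWeight u γ : ℤ) + H (γ 0) := by
  intro u
  induction u with
  | nil =>
    rintro H _ x γ ⟨h1, _⟩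
    simp only [List.length_nil] at h1
    simp [RSOS, pathWeight, h1]
  | cons a l ih =>
    intro H hH x γ hγ
    have key := ih (rsosStep H a) (lip_rsosStep hH a) x _ (isLatticePath_cons hγ)
    have hR : RSOS (a :: l) H x = RSOS l (rsosStep H a) x := rfl
    rw [hR, pathWeight_cons]
    have hstep := hγ.2 0 (by simp)
    simp only [List.getD_cons_zero, Nat.zero_add] at hstep
    have claim : rsosStep H a (γ 1) ≤ (if γ 1 = a then 1 else 0) + H (γ 0) := by
      by_cases h1a : γ 1 = a
      · rw [if_pos h1a]
        by_cases hacc : ∀ e ∈ nbr d, H a ≤ H (a + e)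
        · rw [show rsosStep H a (γ 1) = H a + 1 from by rw [rsosStep]; exact if_pos ⟨h1a, hacc⟩]
          rcases hstep with h | ⟨_, hmem⟩
          · rw [h, h1a]; omega
          · have h2 := hacc _ hmem
            rw [h1a, show a + (γ 0 - a) = γ 0 from by abel] at h2
            omega
        · rw [show rsosStep H a (γ 1) = H (γ 1) from by
            rw [rsosStep]; exact if_neg (fun hc => hacc hc.2)]
          rw [h1a]
          rcases hstep with h | ⟨_, hmem⟩
          · rw [h, h1a]; omega
          · have h2 := hH (γ 1) _ hmem
            rw [h1a, show a + (γ 0 - a) = γ 0 from by abel] at h2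
            rw [abs_le] at h2; omega
      · rw [if_neg h1a]
        rcases hstep with h | ⟨hc, _⟩
        · rw [show rsosStep H a (γ 1) = H (γ 1) from by
            rw [rsosStep]; exact if_neg (fun hc => h1a hc.1), h]
          omega
        · exact absurd hc h1a
    push_cast
    linarith

/-- Existence: there is a lattice path attaining the RSOS height at `x`. -/
lemma exists_min_path {d : ℕ} : ∀ (u : List (Fin d → ℤ)) (H : (Fin d → ℤ) → ℤ), Lip H →
    ∀ x : Fin d → ℤ, ∃ γ, IsLatticePath u x γ ∧ (pathWeight u γ : ℤ) + H (γ 0) = RSOS u H x := by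
  intro u
  induction u with
  | nil =>
    intro H _ x
    exact ⟨fun _ => x, ⟨rfl, by simp⟩, by simp [pathWeight, RSOS]⟩
  | cons a l ih =>
    intro H hH x
    obtain ⟨γ', hγ', hval⟩ := ih (rsosStep H a) (lip_rsosStep hH a) x
    have hg : ∃ g0 : Fin d → ℤ,
        (g0 = γ' 0 ∨ (γ' 0 = a ∧ g0 - γ' 0 ∈ nbr d)) ∧
        ((if γ' 0 = a then 1 else 0) : ℤ) + H g0 = rsosStep H a (γ' 0) := by
      by_cases h0a : γ' 0 = a
      · by_cases hacc : ∀ e ∈ nbr d, H a ≤ H (a + e)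
        · refine ⟨γ' 0, Or.inl rfl, ?_⟩
          rw [if_pos h0a, h0a,
            show rsosStep H a a = H a + 1 from by rw [rsosStep]; exact if_pos ⟨rfl, hacc⟩]
          ring
        · have hacc' := hacc
          push_neg at hacc'
          obtain ⟨e, he, hlt⟩ := hacc'
          refine ⟨a + e, Or.inr ⟨h0a, by rw [h0a, add_sub_cancel_left]; exact he⟩, ?_⟩
          rw [if_pos h0a, h0a,
            show rsosStep H a a = H a from by rw [rsosStep]; exact if_neg (fun hc => hacc hc.2)]
          have hL := hH a e he
          rw [abs_le] at hL
          omega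
      · refine ⟨γ' 0, Or.inl rfl, ?_⟩
        rw [if_neg h0a,
          show rsosStep H a (γ' 0) = H (γ' 0) from by
            rw [rsosStep]; exact if_neg (fun hc => h0a hc.1)]
        ring
    obtain ⟨g0, hrel, hval0⟩ := hg
    refine ⟨fun k => match k with | 0 => g0 | (m + 1) => γ' m, ⟨?_, ?_⟩, ?_⟩
    · exact hγ'.1
    · intro k hk
      match k with
      | 0 =>
        rcases hrel with h | ⟨h1, h2⟩
        · exact Or.inl h
        · exact Or.inr ⟨by simpa [List.getD_cons_zero] using h1, h2⟩
      | (m + 1) =>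
        have := hγ'.2 m (by simpa [List.length_cons] using hk)
        show γ' m = γ' (m + 1) ∨ (γ' (m + 1) = (a :: l).getD (m + 1) 0 ∧ γ' m - γ' (m + 1) ∈ nbr d)
        simpa [List.getD_cons_succ] using this
    · rw [pathWeight_cons]
      show ((if γ' 0 = a then (1:ℕ) else 0) + pathWeight l γ' : ℤ) + H g0
        = RSOS l (rsosStep H a) x
      rw [← hval, ← hval0]
      push_cast
      ring

lemma getD_drop' {d : ℕ} (l : List (Fin d → ℤ)) (j m : ℕ) :
    (l.drop j).getD m 0 = l.getD (j + m) 0 := by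
  simp [List.getD_eq_getElem?_getD, List.getElem?_drop]

lemma getD_take' {d : ℕ} (l : List (Fin d → ℤ)) (j k : ℕ) (h : k < j) :
    (l.take j).getD k 0 = l.getD k 0 := by
  simp [List.getD_eq_getElem?_getD, List.getElem?_take_of_lt h]

/-- influential updates lie on every minimal path: suppose `H` has
adjacent differences bounded by one, and `γ` is a lattice path for `u` starting at `x`
attaining the minimum of `W(γ) + H(γ 0)`. If inserting an update at location `y` after
position `j` increases the RSOS height at `x` by one, then `γ j = y`. -/
theorem influential_on_minimal_path {d : ℕ} (hd : 1 ≤ d) (H : (Fin d → ℤ) → ℤ)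
    (hH : ∀ z : Fin d → ℤ, ∀ e ∈ nbr d, |H z - H (z + e)| ≤ 1)
    (u : List (Fin d → ℤ)) (x : Fin d → ℤ) (γ : ℕ → (Fin d → ℤ))
    (hγ : IsLatticePath u x γ)
    (hmin : ∀ γ' : ℕ → (Fin d → ℤ), IsLatticePath u x γ' →
      (pathWeight u γ : ℤ) + H (γ 0) ≤ (pathWeight u γ' : ℤ) + H (γ' 0))
    (j : ℕ) (hj : j ≤ u.length) (y : Fin d → ℤ)
    (hinf : RSOS (u.take j ++ y :: u.drop j) H x = RSOS u H x + 1) :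
    γ j = y := by
  by_contra hne
  set n := u.length with hn
  set u' := u.take j ++ y :: u.drop j with hu'
  set γ'' : ℕ → (Fin d → ℤ) := fun k => if k ≤ j then γ k else γ (k - 1) with hγ''
  have htl : (u.take j).length = j := by
    rw [List.length_take]; omega
  have hlen' : u'.length = n + 1 := by
    rw [hu', List.length_append, htl, List.length_cons, List.length_drop]; omega
  -- getD facts about u'
  have hgd1 : ∀ k < j, u'.getD k 0 = u.getD k 0 := by
    intro k hk
    rw [hu', List.getD_append _ _ _ _ (by rw [htl]; exact hk), getD_take' _ _ _ hk]
  have hgd2 : u'.getD j 0 = y := by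
    rw [hu', List.getD_append_right _ _ _ _ (by rw [htl])]
    rw [htl, Nat.sub_self, List.getD_cons_zero]
  have hgd3 : ∀ k, j < k → u'.getD k 0 = u.getD (k - 1) 0 := by
    intro k hk
    rw [hu', List.getD_append_right _ _ _ _ (by rw [htl]; omega), htl]
    obtain ⟨m, hm⟩ : ∃ m, k - j = m + 1 := ⟨k - j - 1, by omega⟩
    rw [hm, List.getD_cons_succ, getD_drop']
    congr 1
    omega
  -- γ'' values
  have hg1 : ∀ k ≤ j, γ'' k = γ k := fun k hk => by rw [hγ'']; exact if_pos hk
  have hg2 : ∀ k, j < k → γ'' k = γ (k - 1) := fun k hk => by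
    rw [hγ'']; exact if_neg (by omega)
  -- γ'' is a lattice path for u'
  have hpath'' : IsLatticePath u' x γ'' := by
    constructor
    · rw [hlen', hg2 (n + 1) (by omega)]
      simpa using hγ.1
    · intro k hk
      rw [hlen'] at hk
      rcases lt_trichotomy k j with h | h | h
      · rw [hg1 k (by omega), hg1 (k + 1) (by omega), hgd1 k h]
        exact hγ.2 k (by omega)
      · subst h
        rw [hg1 k le_rfl, hg2 (k + 1) (by omega)]
        simp
      · rw [hg2 k (by omega), hg2 (k + 1) (by omega), hgd3 k h]
        have hstep := hγ.2 (k - 1) (by omega)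
        rw [show k - 1 + 1 = k from by omega] at hstep
        rw [show k + 1 - 1 = k from by omega]
        exact hstep
  -- the weight of γ'' equals the weight of γ
  have hw : pathWeight u' γ'' = pathWeight u γ := by
    unfold pathWeight
    rw [Finset.card_filter, Finset.card_filter, hlen', ← hn]
    obtain ⟨m, hm⟩ : ∃ m, n = j + m := ⟨n - j, by omega⟩
    rw [hm, show j + m + 1 = j + (1 + m) from by omega, Finset.sum_range_add,
      Finset.sum_range_add, Finset.sum_range_add]
    congr 1
    · apply Finset.sum_congr rfl
      intro i hi
      rw [Finset.mem_range] at hi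
      rw [hg1 (i + 1) (by omega), hgd1 i hi]
    · have hFj : ∀ i ∈ Finset.range 1,
          (if γ'' (j + i + 1) = u'.getD (j + i) 0 then 1 else 0) = 0 := by
        intro i hi
        rw [Finset.mem_range] at hi
        interval_cases i
        rw [hg2 (j + 0 + 1) (by omega)]
        simp only [Nat.add_zero, Nat.add_sub_cancel]
        rw [hgd2]
        exact if_neg hne
      rw [Finset.sum_congr rfl hFj, Finset.sum_const_zero, zero_add]
      apply Finset.sum_congr rfl
      intro i _
      rw [hg2 (j + (1 + i) + 1) (by omega), hgd3 (j + (1 + i)) (by omega)]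
      rw [show j + (1 + i) + 1 - 1 = j + i + 1 from by omega,
        show j + (1 + i) - 1 = j + i from by omega]
  -- the minimal value of γ equals RSOS u H x
  obtain ⟨γs, hγs, hvals⟩ := exists_min_path u H hH x
  have hub : (pathWeight u γ : ℤ) + H (γ 0) ≤ RSOS u H x := by
    rw [← hvals]; exact hmin γs hγs
  -- but γ'' gives a path for u' with the same value, contradicting hinf
  have hlow := rsos_le_path u' H hH x γ'' hpath''
  rw [hu'] at hinf
  rw [hinf, hw, hg1 0 (by omega)] at hlow
  omega
end
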